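/- Let T₃^high = [−π/2, 3π/2)³ \ [−π/2, π/2)³. For every (θ₁, θ₂, θ₃) ∈ T₃^high, the quantity g(cos θ₁, cos θ₂, cos θ₃) = (2/27)(2 + cos θ₁)(2 + cos θ₂)(2 + cos θ₃)(3 − cos θ₁ − cos θ₂ − cos θ₃) satisfies 4/9 ≤ g ≤ 1372/729 (= 4·7³/3⁶). Moreover the minimum 4/9 is attained at (θ₁,θ₂,θ₃) = (π, π, π) (where the cosines are (−1,−1,−1)) and the maximum 1372/729 is attained at a point of T₃^high where (cos θ₁, cos θ₂, cos θ₃) = (0, 1/3, 1/3). -/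
import Mathlib


open Real

def T3high : Set (ℝ × ℝ × ℝ) :=
  (Set.Ico (-(π / 2)) (3 * π / 2) ×ˢ
      (Set.Ico (-(π / 2)) (3 * π / 2) ×ˢ Set.Ico (-(π / 2)) (3 * π / 2))) \
    (Set.Ico (-(π / 2)) (π / 2) ×ˢ (Set.Ico (-(π / 2)) (π / 2) ×ˢ Set.Ico (-(π / 2)) (π / 2)))

noncomputable def gMass3 (θ : ℝ × ℝ × ℝ) : ℝ :=
  (2 / 27) * (2 + cos θ.1) * (2 + cos θ.2.1) * (2 + cos θ.2.2) *
    (3 - cos θ.1 - cos θ.2.1 - cos θ.2.2)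

private lemma key_low {x y z : ℝ} (hx : -1 ≤ x) (hx0 : x ≤ 0) (hy : -1 ≤ y) (hy1 : y ≤ 1)
    (hz : -1 ≤ z) (hz1 : z ≤ 1) :
    (6:ℝ) ≤ (2+x)*(2+y)*(2+z)*(3-x-y-z) := by
  nlinarith [mul_nonneg (mul_nonneg (by linarith : (0:ℝ) ≤ 1+x) (by linarith : (0:ℝ) ≤ 1+y)) (by linarith : (0:ℝ) ≤ 1+z),
    mul_nonneg (by linarith : (0:ℝ) ≤ 1+x) (by linarith : (0:ℝ) ≤ 1+y),
    mul_nonneg (by linarith : (0:ℝ) ≤ 1+y) (by linarith : (0:ℝ) ≤ 1+z),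
    mul_nonneg (by linarith : (0:ℝ) ≤ 1+x) (by linarith : (0:ℝ) ≤ 1+z),
    mul_nonneg (mul_nonneg (by linarith : (0:ℝ) ≤ 1+x) (by linarith : (0:ℝ) ≤ 1+y)) (by linarith : (0:ℝ) ≤ 1-z),
    mul_nonneg (mul_nonneg (by linarith : (0:ℝ) ≤ 1+x) (by linarith : (0:ℝ) ≤ 1-y)) (by linarith : (0:ℝ) ≤ 1+z),
    mul_nonneg (mul_nonneg (by linarith : (0:ℝ) ≤ 1+x) (by linarith : (0:ℝ) ≤ 1-y)) (by linarith : (0:ℝ) ≤ 1-z),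
    mul_nonneg (mul_nonneg (by linarith : (0:ℝ) ≤ -x) (by linarith : (0:ℝ) ≤ 1+y)) (by linarith : (0:ℝ) ≤ 1+z),
    mul_nonneg (mul_nonneg (by linarith : (0:ℝ) ≤ -x) (by linarith : (0:ℝ) ≤ 1-y)) (by linarith : (0:ℝ) ≤ 1-z),
    mul_nonneg (mul_nonneg (by linarith : (0:ℝ) ≤ -x) (by linarith : (0:ℝ) ≤ 1+y)) (by linarith : (0:ℝ) ≤ 1-z),
    mul_nonneg (mul_nonneg (by linarith : (0:ℝ) ≤ -x) (by linarith : (0:ℝ) ≤ 1-y)) (by linarith : (0:ℝ) ≤ 1+z)]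

private lemma amgm3 {a b c : ℝ} (ha : 0 ≤ a) (hb : 0 ≤ b) (hc : 0 ≤ c) :
    27 * (a*b*c) ≤ (a+b+c)^3 := by
  nlinarith [mul_nonneg ha (sq_nonneg (b-c)), mul_nonneg hb (sq_nonneg (a-c)),
    mul_nonneg hc (sq_nonneg (a-b)), mul_nonneg (mul_nonneg ha hb) hc,
    sq_nonneg (a-b), sq_nonneg (b-c), sq_nonneg (a-c)]

private lemma key_high {x y z : ℝ} (hx : -1 ≤ x) (hx0 : x ≤ 0) (hy : -1 ≤ y) (hy1 : y ≤ 1)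
    (hz : -1 ≤ z) (hz1 : z ≤ 1) :
    (2+x)*(2+y)*(2+z)*(3-x-y-z) ≤ 686/27 := by
  have h1 : 27 * ((2+y)*(2+z)*(3-x-y-z)) ≤ (7-x)^3 := by
    have := amgm3 (a := 2+y) (b := 2+z) (c := 3-x-y-z)
      (by linarith) (by linarith) (by linarith)
    calc 27 * ((2+y)*(2+z)*(3-x-y-z)) ≤ ((2+y)+(2+z)+(3-x-y-z))^3 := this
      _ = (7-x)^3 := by ring
  have h2 : (2+x)*(7-x)^3 ≤ 686 := by
    nlinarith [sq_nonneg x, sq_nonneg (x+1), mul_nonneg (neg_nonneg.2 hx0) (sq_nonneg x)]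
  have h3 : (2+x) * (27 * ((2+y)*(2+z)*(3-x-y-z))) ≤ (2+x) * (7-x)^3 :=
    mul_le_mul_of_nonneg_left h1 (by linarith)
  nlinarith [h3, h2]

private lemma key {x y z : ℝ} (hx : -1 ≤ x) (hx0 : x ≤ 0) (hy : -1 ≤ y) (hy1 : y ≤ 1)
    (hz : -1 ≤ z) (hz1 : z ≤ 1) :
    4/9 ≤ (2/27)*(2+x)*(2+y)*(2+z)*(3-x-y-z) ∧
      (2/27)*(2+x)*(2+y)*(2+z)*(3-x-y-z) ≤ 1372/729 := by
  have hl := key_low hx hx0 hy hy1 hz hz1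
  have hh := key_high hx hx0 hy hy1 hz hz1
  constructor <;> nlinarith [hl, hh]

theorem stmt_14 :
    (∀ θ ∈ T3high, 4 / 9 ≤ gMass3 θ ∧ gMass3 θ ≤ 1372 / 729) ∧
    ((1372 : ℝ) / 729 = 4 * 7 ^ 3 / 3 ^ 6) ∧
    (π, π, π) ∈ T3high ∧ cos π = -1 ∧ gMass3 (π, π, π) = 4 / 9 ∧
    (∃ θ : ℝ × ℝ × ℝ, θ ∈ T3high ∧ cos θ.1 = 0 ∧ cos θ.2.1 = 1 / 3 ∧ cos θ.2.2 = 1 / 3 ∧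
      gMass3 θ = 1372 / 729) := by
  have hpi := Real.pi_pos
  refine ⟨?_, by norm_num, ?_, Real.cos_pi, ?_, ?_⟩
  · rintro ⟨a, b, c⟩ ⟨⟨ha, hb, hc⟩, hnot⟩
    simp only [Set.mem_prod, Set.mem_Ico] at ha hb hc hnot
    have hca1 : -1 ≤ cos a := Real.neg_one_le_cos a
    have hca2 : cos a ≤ 1 := Real.cos_le_one a
    have hcb1 : -1 ≤ cos b := Real.neg_one_le_cos b
    have hcb2 : cos b ≤ 1 := Real.cos_le_one b
    have hcc1 : -1 ≤ cos c := Real.neg_one_le_cos c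
    have hcc2 : cos c ≤ 1 := Real.cos_le_one c
    -- one of a, b, c is in [π/2, 3π/2), so its cosine is ≤ 0
    have hcase : π/2 ≤ a ∨ π/2 ≤ b ∨ π/2 ≤ c := by
      by_contra h
      push_neg at h
      exact hnot ⟨⟨ha.1, h.1⟩, ⟨hb.1, h.2.1⟩, ⟨hc.1, h.2.2⟩⟩
    have hg : gMass3 (a, b, c) =
        (2/27)*(2+cos a)*(2+cos b)*(2+cos c)*(3 - cos a - cos b - cos c) := rfl
    rcases hcase with h | h | h
    · have h0 : cos a ≤ 0 :=
        Real.cos_nonpos_of_pi_div_two_le_of_le h (by linarith [ha.2])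
      have := key hca1 h0 hcb1 hcb2 hcc1 hcc2
      rw [hg]
      exact this
    · have h0 : cos b ≤ 0 :=
        Real.cos_nonpos_of_pi_div_two_le_of_le h (by linarith [hb.2])
      have := key hcb1 h0 hca1 hca2 hcc1 hcc2
      rw [hg]
      constructor
      · calc (4:ℝ)/9 ≤ (2/27)*(2+cos b)*(2+cos a)*(2+cos c)*(3 - cos b - cos a - cos c) :=
            this.1
          _ = (2/27)*(2+cos a)*(2+cos b)*(2+cos c)*(3 - cos a - cos b - cos c) := by ring
      · calc (2/27)*(2+cos a)*(2+cos b)*(2+cos c)*(3 - cos a - cos b - cos c)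
            = (2/27)*(2+cos b)*(2+cos a)*(2+cos c)*(3 - cos b - cos a - cos c) := by ring
          _ ≤ 1372/729 := this.2
    · have h0 : cos c ≤ 0 :=
        Real.cos_nonpos_of_pi_div_two_le_of_le h (by linarith [hc.2])
      have := key hcc1 h0 hca1 hca2 hcb1 hcb2
      rw [hg]
      constructor
      · calc (4:ℝ)/9 ≤ (2/27)*(2+cos c)*(2+cos a)*(2+cos b)*(3 - cos c - cos a - cos b) :=
            this.1
          _ = (2/27)*(2+cos a)*(2+cos b)*(2+cos c)*(3 - cos a - cos b - cos c) := by ring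
      · calc (2/27)*(2+cos a)*(2+cos b)*(2+cos c)*(3 - cos a - cos b - cos c)
            = (2/27)*(2+cos c)*(2+cos a)*(2+cos b)*(3 - cos c - cos a - cos b) := by ring
          _ ≤ 1372/729 := this.2
  · constructor
    · refine ⟨⟨by linarith, by linarith⟩, ⟨by linarith, by linarith⟩, by linarith, by linarith⟩
    · intro h
      obtain ⟨⟨_, h2⟩, _⟩ := h
      linarith
  · simp only [gMass3, Real.cos_pi]
    norm_num
  · refine ⟨(π/2, Real.arccos (1/3), Real.arccos (1/3)), ⟨?_, ?_⟩, ?_, ?_, ?_, ?_⟩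
    · simp only [Set.mem_prod, Set.mem_Ico]
      refine ⟨⟨by linarith, by linarith⟩,
        ⟨⟨by linarith [Real.arccos_nonneg (1/3 : ℝ)], by linarith [Real.arccos_le_pi (1/3 : ℝ)]⟩,
         ⟨by linarith [Real.arccos_nonneg (1/3 : ℝ)], by linarith [Real.arccos_le_pi (1/3 : ℝ)]⟩⟩⟩
    · intro h
      simp only [Set.mem_prod, Set.mem_Ico] at h
      obtain ⟨⟨_, h2⟩, _⟩ := h
      linarith
    · exact Real.cos_pi_div_two
    · exact Real.cos_arccos (by norm_num) (by norm_num)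
    · exact Real.cos_arccos (by norm_num) (by norm_num)
    · simp only [gMass3, Real.cos_pi_div_two,
        Real.cos_arccos (by norm_num : (-1:ℝ) ≤ 1/3) (by norm_num : (1:ℝ)/3 ≤ 1)]
      norm_num
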